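/- arXiv:2002.11816 — 5 statements merged into one kernel-verified Lean document; each statement's English description precedes it below -/
import Mathlib

section
/- Let a, b, s be real numbers with 0 ≤ a < b, 0 < s, and 2·s·b ≤ b − a. Define the sequence θ : ℕ → ℝ by θ 1 = b and θ (k+1) = ((θ k − a)·θ k·(1 − s) + (b − θ k)·θ k·(1 + s))/(b − a). Then the sequence k ↦ (θ k − a)/(b − a) converges to 1/2 as k → ∞. -/
/-!
Writing `m = (a + b) / 2` and `T = vuUpdate a b s`, the update map satisfies
`T θ - m = (θ - m) * (1 - 2 s θ / (b - a))`. On `[m, b]` the factor lies in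
`[0, 1 - 2 s m / (b - a)]`: it is nonnegative because `2 s b ≤ b - a`, and bounded by a
constant `< 1` because `m > 0`. Hence `T` maps `[m, b]` into itself and contracts towards `m`,
so from `θ 1 = b` the thresholds converge geometrically to the midpoint, where the labelling
probability `(θ - a) / (b - a)` equals `1 / 2`.
-/

open Filter Topology Set

theorem tendsto_of_dist_le_mul_dist {X : Type*} [PseudoMetricSpace X] {u : ℕ → X} {c : X}
    {q : ℝ} (hq₀ : 0 ≤ q) (hq₁ : q < 1) (hu : ∀ n, dist (u (n + 1)) c ≤ q * dist (u n) c) :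
    Tendsto u atTop (𝓝 c) := by
  have hgeom : ∀ n, dist (u n) c ≤ dist (u 0) c * q ^ n := by
    intro n
    induction n with
    | zero => simp
    | succ n ih =>
      calc dist (u (n + 1)) c ≤ q * dist (u n) c := hu n
        _ ≤ q * (dist (u 0) c * q ^ n) := mul_le_mul_of_nonneg_left ih hq₀
        _ = dist (u 0) c * q ^ (n + 1) := by ring
  have hlim : Tendsto (fun n => dist (u 0) c * q ^ n) atTop (𝓝 0) := by
    simpa using (tendsto_pow_atTop_nhds_zero_of_lt_one hq₀ hq₁).const_mul (dist (u 0) c)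
  exact tendsto_iff_dist_tendsto_zero.2 (squeeze_zero (fun _ => dist_nonneg) hgeom hlim)

/-- The expected-threshold update of the Variable Uncertainty strategy. -/
noncomputable def vuUpdate (a b s θ : ℝ) : ℝ :=
  ((θ - a) * θ * (1 - s) + (b - θ) * θ * (1 + s)) / (b - a)

section

variable {a b s θ : ℝ}

theorem vuUpdate_sub_midpoint (hab : a < b) :
    vuUpdate a b s θ - (a + b) / 2 = (θ - (a + b) / 2) * (1 - 2 * s * θ / (b - a)) := by
  have : b - a ≠ 0 := by linarith
  unfold vuUpdate
  field_simp
  ring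

theorem vuUpdate_sub_midpoint_mem_Icc (hab : a < b) (hs : 0 < s)
    (hsb : 2 * s * b ≤ b - a) (hθ : θ ∈ Icc ((a + b) / 2) b) :
    vuUpdate a b s θ - (a + b) / 2 ∈
      Icc 0 ((1 - 2 * s * ((a + b) / 2) / (b - a)) * (θ - (a + b) / 2)) := by
  obtain ⟨hmθ, hθb⟩ := hθ
  have hba : 0 < b - a := by linarith
  have hfactor_nonneg : 0 ≤ 1 - 2 * s * θ / (b - a) := by
    rw [sub_nonneg, div_le_one hba]
    nlinarith
  have hfactor_le : 1 - 2 * s * θ / (b - a) ≤ 1 - 2 * s * ((a + b) / 2) / (b - a) := by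
    gcongr
  rw [vuUpdate_sub_midpoint hab]
  have hdev : 0 ≤ θ - (a + b) / 2 := by linarith
  constructor
  · positivity
  · rw [mul_comm]
    exact mul_le_mul_of_nonneg_right hfactor_le hdev

theorem midpoint_contraction_factor_mem_Ico (ha : 0 ≤ a) (hab : a < b) (hs : 0 < s)
    (hsb : 2 * s * b ≤ b - a) : 1 - 2 * s * ((a + b) / 2) / (b - a) ∈ Ico 0 1 := by
  have hba : 0 < b - a := by linarith
  constructor
  · rw [sub_nonneg, div_le_one hba]
    nlinarith
  · have : 0 < 2 * s * ((a + b) / 2) / (b - a) := div_pos (by nlinarith) hba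
    linarith

theorem vuUpdate_mem_Icc (ha : 0 ≤ a) (hab : a < b) (hs : 0 < s) (hsb : 2 * s * b ≤ b - a)
    (hθ : θ ∈ Icc ((a + b) / 2) b) : vuUpdate a b s θ ∈ Icc ((a + b) / 2) b := by
  obtain ⟨hlow, hup⟩ := vuUpdate_sub_midpoint_mem_Icc hab hs hsb hθ
  have hq : 1 - 2 * s * ((a + b) / 2) / (b - a) ≤ 1 :=
    (midpoint_contraction_factor_mem_Ico ha hab hs hsb).2.le
  have hdev : 0 ≤ θ - (a + b) / 2 := by linarith [hθ.1]
  constructor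
  · linarith
  · nlinarith [hθ.2]

theorem dist_vuUpdate_midpoint_le (hab : a < b) (hs : 0 < s) (hsb : 2 * s * b ≤ b - a)
    (hθ : θ ∈ Icc ((a + b) / 2) b) :
    dist (vuUpdate a b s θ) ((a + b) / 2) ≤
      (1 - 2 * s * ((a + b) / 2) / (b - a)) * dist θ ((a + b) / 2) := by
  obtain ⟨hlow, hup⟩ := vuUpdate_sub_midpoint_mem_Icc hab hs hsb hθ
  rwa [Real.dist_eq, Real.dist_eq, abs_of_nonneg hlow, abs_of_nonneg (sub_nonneg.2 hθ.1)]

end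

theorem vu_label_probability_tendsto_half
    (a b s : ℝ) (ha : 0 ≤ a) (hab : a < b) (hs : 0 < s)
    (hsb : 2 * s * b ≤ b - a) (θ : ℕ → ℝ) (hθ1 : θ 1 = b)
    (hrec : ∀ k, 1 ≤ k → θ (k + 1) =
      ((θ k - a) * θ k * (1 - s) + (b - θ k) * θ k * (1 + s)) / (b - a)) :
    Tendsto (fun k => (θ k - a) / (b - a)) atTop (𝓝 (1 / 2)) := by
  have hstep : ∀ n, θ (n + 1 + 1) = vuUpdate a b s (θ (n + 1)) :=
    fun n => hrec (n + 1) n.succ_pos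
  have hmem : ∀ n, θ (n + 1) ∈ Icc ((a + b) / 2) b := by
    intro n
    induction n with
    | zero => exact ⟨by rw [hθ1]; linarith, hθ1.le⟩
    | succ n ih => rw [hstep]; exact vuUpdate_mem_Icc ha hab hs hsb ih
  obtain ⟨hq₀, hq₁⟩ := midpoint_contraction_factor_mem_Ico ha hab hs hsb
  have hθ_lim : Tendsto θ atTop (𝓝 ((a + b) / 2)) :=
    (tendsto_add_atTop_iff_nat 1).1 <| tendsto_of_dist_le_mul_dist hq₀ hq₁ fun n => by
      rw [hstep]; exact dist_vuUpdate_midpoint_le hab hs hsb (hmem n)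
  have hhalf : ((a + b) / 2 - a) / (b - a) = 1 / 2 := by
    field_simp [(sub_pos.2 hab).ne']
    ring
  simpa [hhalf] using (hθ_lim.sub_const a).div_const (b - a)
end

section
/- Let a, b, s be real numbers with 0 ≤ a < b, 0 < s, and 2·s·b ≤ b − a. Define the sequence θ : ℕ → ℝ by θ 1 = b and θ (k+1) = ((θ k − a)·θ k·(1 − s) + (b − θ k)·θ k·(1 + s))/(b − a). Then θ k converges to (a + b)/2 as k → ∞. -/
/-!
Writing `m = (a + b) / 2`, the recurrence reads `θ (k + 1) - m = (θ k - m) * (1 - 2 s θ k / (b - a))`.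
On `[m, b]` the factor lies in `[0, 1 - s (a + b) / (b - a)]`: it is nonnegative because
`2 s b ≤ b - a`, and the upper bound comes from `θ k ≥ m`. Hence `[m, b]` is invariant, and from
`θ 1 = b` on the distance to `m` shrinks geometrically with ratio `1 - s (a + b) / (b - a) < 1`.
-/

open Filter Topology Set

theorem tendsto_of_dist_succ_le_mul {X : Type*} [PseudoMetricSpace X] {x : ℕ → X} {l : X}
    {c : ℝ} (hc0 : 0 ≤ c) (hc1 : c < 1) (h : ∀ k, dist (x (k + 1)) l ≤ c * dist (x k) l) :
    Tendsto x atTop (𝓝 l) := by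
  have hgeom : ∀ k, dist (x k) l ≤ dist (x 0) l * c ^ k := by
    intro k
    induction k with
    | zero => simp
    | succ k ih =>
      calc dist (x (k + 1)) l ≤ c * dist (x k) l := h k
        _ ≤ c * (dist (x 0) l * c ^ k) := by gcongr
        _ = dist (x 0) l * c ^ (k + 1) := by ring
  have hpow := (tendsto_pow_atTop_nhds_zero_of_lt_one hc0 hc1).const_mul (dist (x 0) l)
  rw [mul_zero] at hpow
  exact tendsto_iff_dist_tendsto_zero.2 (squeeze_zero (fun _ ↦ dist_nonneg) hgeom hpow)

/-- One step `θ̄ₖ ↦ θ̄ₖ₊₁` of the expected certainty threshold of the Variable Uncertainty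
strategy, for certainty scores uniform on `[a, b]` and step size `s`. -/
noncomputable def vuThresholdStep (a b s x : ℝ) : ℝ :=
  ((x - a) * x * (1 - s) + (b - x) * x * (1 + s)) / (b - a)

section

variable {a b s x : ℝ}

theorem vuThresholdStep_sub_midpoint (hab : a ≠ b) :
    vuThresholdStep a b s x - (a + b) / 2 = (x - (a + b) / 2) * (1 - 2 * s * x / (b - a)) := by
  have hba : b - a ≠ 0 := sub_ne_zero.2 hab.symm
  unfold vuThresholdStep
  field_simp
  ring

theorem one_sub_mul_div_mem_Icc (hab : a < b) (hs : 0 ≤ s) (hsb : 2 * s * b ≤ b - a)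
    (hx : x ∈ Icc ((a + b) / 2) b) :
    1 - 2 * s * x / (b - a) ∈ Icc 0 (1 - s * (a + b) / (b - a)) := by
  have hba : 0 < b - a := sub_pos.2 hab
  constructor
  · have : 2 * s * x ≤ b - a := le_trans (by nlinarith [hx.2]) hsb
    linarith [(div_le_one hba).2 this]
  · have : s * (a + b) ≤ 2 * s * x := by nlinarith [hx.1]
    linarith [div_le_div_of_nonneg_right this hba.le]

theorem vuThresholdStep_mem_Icc (hab : a < b) (hs : 0 ≤ s) (hsb : 2 * s * b ≤ b - a)
    (ha : 0 ≤ a + b) (hx : x ∈ Icc ((a + b) / 2) b) :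
    vuThresholdStep a b s x ∈ Icc ((a + b) / 2) b := by
  obtain ⟨hf0, hfc⟩ := one_sub_mul_div_mem_Icc hab hs hsb hx
  have hc : s * (a + b) / (b - a) ≥ 0 := div_nonneg (mul_nonneg hs ha) (sub_pos.2 hab).le
  have hxm : 0 ≤ x - (a + b) / 2 := sub_nonneg.2 hx.1
  have hstep := vuThresholdStep_sub_midpoint (s := s) (x := x) hab.ne
  constructor <;> nlinarith [hx.2]

theorem dist_vuThresholdStep_midpoint_le (hab : a < b) (hs : 0 ≤ s) (hsb : 2 * s * b ≤ b - a)
    (hx : x ∈ Icc ((a + b) / 2) b) :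
    dist (vuThresholdStep a b s x) ((a + b) / 2) ≤
      (1 - s * (a + b) / (b - a)) * dist x ((a + b) / 2) := by
  obtain ⟨hf0, hfc⟩ := one_sub_mul_div_mem_Icc hab hs hsb hx
  rw [Real.dist_eq, Real.dist_eq, vuThresholdStep_sub_midpoint hab.ne, abs_mul,
    abs_of_nonneg hf0, mul_comm]
  exact mul_le_mul_of_nonneg_right hfc (abs_nonneg _)

end

theorem vu_threshold_tendsto_midpoint
    (a b s : ℝ) (ha : 0 ≤ a) (hab : a < b) (hs : 0 < s)
    (hsb : 2 * s * b ≤ b - a) (θ : ℕ → ℝ) (hθ1 : θ 1 = b)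
    (hrec : ∀ k, 1 ≤ k → θ (k + 1) =
      ((θ k - a) * θ k * (1 - s) + (b - θ k) * θ k * (1 + s)) / (b - a)) :
    Tendsto θ atTop (𝓝 ((a + b) / 2)) := by
  have hsum : 0 < a + b := by linarith
  have hstep : ∀ k, θ (k + 2) = vuThresholdStep a b s (θ (k + 1)) :=
    fun k ↦ hrec (k + 1) (Nat.le_add_left 1 k)
  have hmem : ∀ k, θ (k + 1) ∈ Icc ((a + b) / 2) b := by
    intro k
    induction k with
    | zero => rw [hθ1]; exact ⟨by linarith, le_rfl⟩
    | succ k ih => rw [hstep]; exact vuThresholdStep_mem_Icc hab hs.le hsb hsum.le ih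
  have hc : 0 < s * (a + b) / (b - a) := div_pos (mul_pos hs hsum) (sub_pos.2 hab)
  have hc1 : s * (a + b) / (b - a) ≤ 1 :=
    (div_le_one (sub_pos.2 hab)).2 (le_trans (by nlinarith) hsb)
  refine (tendsto_add_atTop_iff_nat 1).1 <|
    tendsto_of_dist_succ_le_mul (c := 1 - s * (a + b) / (b - a)) (by linarith) (by linarith) ?_
  intro k
  rw [hstep]
  exact dist_vuThresholdStep_midpoint_le hab hs.le hsb (hmem k)
end

section
/- Let a, b, s be real numbers with 0 ≤ a < b, 0 < s, and 2·s·b ≤ b − a. Define the sequence θ : ℕ → ℝ by θ 1 = b and θ (k+1) = ((θ k − a)·θ k·(1 − s) + (b − θ k)·θ k·(1 + s))/(b − a). Then θ k ≥ (a + b)/2 for every k ≥ 1. -/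
/-!
Writing `m = (a + b) / 2`, the recursion is `θ ↦ f θ` with
`f x - m = (x - m) * (1 - 2 s x / (b - a))` and `f x = x - 2 s x (x - m) / (b - a)`.
Hence `f` maps `[m, b]` into itself: the first identity keeps `f x ≥ m` as long as
`2 s x ≤ 2 s b ≤ b - a`, the second gives `f x ≤ x ≤ b` since `x ≥ m ≥ 0`.
-/

/-- One step of the expected certainty threshold of the Variable Uncertainty strategy. -/
noncomputable def thresholdStep (a b s x : ℝ) : ℝ :=
  ((x - a) * x * (1 - s) + (b - x) * x * (1 + s)) / (b - a)

section thresholdStep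

variable {a b s x : ℝ}

theorem thresholdStep_sub_midpoint (hab : a < b) :
    thresholdStep a b s x - (a + b) / 2 = (x - (a + b) / 2) * (1 - 2 * s * x / (b - a)) := by
  have : b - a ≠ 0 := sub_ne_zero.2 hab.ne'
  unfold thresholdStep
  field_simp
  ring

theorem thresholdStep_eq_sub (hab : a < b) :
    thresholdStep a b s x = x - 2 * s * x * (x - (a + b) / 2) / (b - a) := by
  have : b - a ≠ 0 := sub_ne_zero.2 hab.ne'
  unfold thresholdStep
  field_simp
  ring

theorem midpoint_le_thresholdStep (hab : a < b) (hx : (a + b) / 2 ≤ x)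
    (hsx : 2 * s * x ≤ b - a) : (a + b) / 2 ≤ thresholdStep a b s x := by
  have hfactor : 0 ≤ 1 - 2 * s * x / (b - a) :=
    sub_nonneg.2 ((div_le_one (sub_pos.2 hab)).2 hsx)
  have := thresholdStep_sub_midpoint (s := s) (x := x) hab
  nlinarith [mul_nonneg (sub_nonneg.2 hx) hfactor]

theorem thresholdStep_le_self (hab : a < b) (hs : 0 ≤ s) (hx₀ : 0 ≤ x)
    (hx : (a + b) / 2 ≤ x) : thresholdStep a b s x ≤ x := by
  rw [thresholdStep_eq_sub hab, sub_le_self_iff]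
  have := sub_nonneg.2 hx
  have := sub_pos.2 hab
  positivity

theorem thresholdStep_mapsTo_Icc (ha : 0 ≤ a) (hab : a < b) (hs : 0 ≤ s)
    (hsb : 2 * s * b ≤ b - a) :
    Set.MapsTo (thresholdStep a b s) (Set.Icc ((a + b) / 2) b) (Set.Icc ((a + b) / 2) b) := by
  rintro x ⟨hmx, hxb⟩
  have hx₀ : 0 ≤ x := by linarith
  have hsx : 2 * s * x ≤ b - a := le_trans (by gcongr) hsb
  exact ⟨midpoint_le_thresholdStep hab hmx hsx, (thresholdStep_le_self hab hs hx₀ hmx).trans hxb⟩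

end thresholdStep

theorem vu_threshold_ge_midpoint
    (a b s : ℝ) (ha : 0 ≤ a) (hab : a < b) (hs : 0 < s)
    (hsb : 2 * s * b ≤ b - a) (θ : ℕ → ℝ) (hθ1 : θ 1 = b)
    (hrec : ∀ k, 1 ≤ k → θ (k + 1) =
      ((θ k - a) * θ k * (1 - s) + (b - θ k) * θ k * (1 + s)) / (b - a)) :
    ∀ k, 1 ≤ k → (a + b) / 2 ≤ θ k := by
  have hmem : ∀ k, 1 ≤ k → θ k ∈ Set.Icc ((a + b) / 2) b := by
    intro k hk
    induction k, hk using Nat.le_induction with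
    | base => exact hθ1 ▸ ⟨by linarith, le_rfl⟩
    | succ k hk ih =>
      rw [hrec k hk]
      exact thresholdStep_mapsTo_Icc ha hab hs.le hsb ih
  exact fun k hk => (hmem k hk).1
end

section
/- Let a, b, s be real numbers with 0 ≤ a < b, 0 < s, and 2·s·b ≤ b − a. Define the sequence θ : ℕ → ℝ by θ 1 = b and θ (k+1) = ((θ k − a)·θ k·(1 − s) + (b − θ k)·θ k·(1 + s))/(b − a). Then θ (k+1) ≤ θ k for every k ≥ 1, i.e., the sequence is decreasing. -/
/-!
Writing `m = (a + b) / 2`, the recursion is `θ ↦ f θ` with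
`f x = x + s x (a + b - 2x) / (b - a)` and `f x - m = (x - m) (1 - 2 s x / (b - a))`.
So `f` maps `[m, b]` into itself when `2 s b ≤ b - a`, and on `[m, b]` (where `x ≥ 0`) it satisfies
`f x ≤ x`.
-/

open Set

noncomputable section

/-- One step of the expected certainty threshold recursion. -/
def vuStep (a b s x : ℝ) : ℝ :=
  ((x - a) * x * (1 - s) + (b - x) * x * (1 + s)) / (b - a)

variable {a b s x : ℝ}

theorem vuStep_sub_self (hab : a ≠ b) : vuStep a b s x - x = s * x * (a + b - 2 * x) / (b - a) := by
  have : b - a ≠ 0 := sub_ne_zero.mpr hab.symm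
  unfold vuStep
  field_simp
  ring

theorem vuStep_sub_midpoint (hab : a ≠ b) :
    vuStep a b s x - (a + b) / 2 = (x - (a + b) / 2) * (1 - 2 * s * x / (b - a)) := by
  have : b - a ≠ 0 := sub_ne_zero.mpr hab.symm
  unfold vuStep
  field_simp
  ring

theorem vuStep_le_self (hab : a < b) (hs : 0 ≤ s) (hx : (a + b) / 2 ≤ x) (hx₀ : 0 ≤ x) :
    vuStep a b s x ≤ x := by
  have hnum : s * x * (a + b - 2 * x) ≤ 0 :=
    mul_nonpos_of_nonneg_of_nonpos (mul_nonneg hs hx₀) (by linarith)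
  rw [← sub_nonpos, vuStep_sub_self hab.ne]
  exact div_nonpos_of_nonpos_of_nonneg hnum (by linarith)

theorem midpoint_le_vuStep (hab : a < b) (hs : 0 ≤ s) (hsb : 2 * s * b ≤ b - a)
    (hx : (a + b) / 2 ≤ x) (hxb : x ≤ b) : (a + b) / 2 ≤ vuStep a b s x := by
  have hsx : 2 * s * x / (b - a) ≤ 1 := by
    rw [div_le_one (by linarith)]
    nlinarith
  rw [← sub_nonneg, vuStep_sub_midpoint hab.ne]
  exact mul_nonneg (sub_nonneg.mpr hx) (sub_nonneg.mpr hsx)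

theorem mapsTo_vuStep (ha : 0 ≤ a) (hab : a < b) (hs : 0 ≤ s) (hsb : 2 * s * b ≤ b - a) :
    MapsTo (vuStep a b s) (Icc ((a + b) / 2) b) (Icc ((a + b) / 2) b) := fun x ⟨hx, hxb⟩ =>
  ⟨midpoint_le_vuStep hab hs hsb hx hxb,
    (vuStep_le_self hab hs hx (by linarith)).trans hxb⟩

end

theorem Set.MapsTo.mem_of_succ_eq {α : Type*} {f : α → α} {S : Set α} (hf : MapsTo f S S)
    {u : ℕ → α} {n₀ : ℕ} (h₀ : u n₀ ∈ S) (hu : ∀ k, n₀ ≤ k → u (k + 1) = f (u k)) :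
    ∀ k, n₀ ≤ k → u k ∈ S := by
  intro k hk
  induction k, hk using Nat.le_induction with
  | base => exact h₀
  | succ k hk ih => exact hu k hk ▸ hf ih

theorem vu_threshold_decreasing
    (a b s : ℝ) (ha : 0 ≤ a) (hab : a < b) (hs : 0 < s)
    (hsb : 2 * s * b ≤ b - a) (θ : ℕ → ℝ) (hθ1 : θ 1 = b)
    (hrec : ∀ k, 1 ≤ k → θ (k + 1) =
      ((θ k - a) * θ k * (1 - s) + (b - θ k) * θ k * (1 + s)) / (b - a)) :
    ∀ k, 1 ≤ k → θ (k + 1) ≤ θ k := by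
  have hθ_mem : ∀ k, 1 ≤ k → θ k ∈ Icc ((a + b) / 2) b :=
    (mapsTo_vuStep ha hab hs.le hsb).mem_of_succ_eq
      (by rw [hθ1]; exact ⟨by linarith, le_rfl⟩) hrec
  intro k hk
  obtain ⟨hmid, -⟩ := hθ_mem k hk
  rw [hrec k hk]
  exact vuStep_le_self hab hs.le hmid (by linarith)
end

section
/- Let a, b, s be real numbers with 0 ≤ a < b, 0 < s, and 2·s·b ≤ b − a. Define the sequence θ : ℕ → ℝ by θ 1 = b and θ (k+1) = ((θ k − a)·θ k·(1 − s) + (b − θ k)·θ k·(1 + s))/(b − a). Then there exists a real number l such that θ k converges to l as k → ∞. -/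
/-!
Writing `m = (a + b) / 2`, the recursion is `θ ↦ θ - 2 s θ (θ - m) / (b - a)`, and
`θ' - m = (θ - m) (b - a - 2 s θ) / (b - a)`. Since `2 s θ ≤ 2 s b ≤ b - a` on `[m, b]`, the map
sends `[m, b]` into itself and moves every point of it to the left, so the sequence is
antitone and bounded below by `m`.
-/

open Filter Topology Set

theorem exists_tendsto_of_antitone_orbit {f : ℝ → ℝ} {S : Set ℝ} (hS : BddBelow S)
    (hmaps : MapsTo f S S) (hle : ∀ x ∈ S, f x ≤ x) {u : ℕ → ℝ} (h0 : u 0 ∈ S)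
    (hu : ∀ n, u (n + 1) = f (u n)) : ∃ l, Tendsto u atTop (𝓝 l) := by
  have hmem : ∀ n, u n ∈ S := fun n => by
    induction n with
    | zero => exact h0
    | succ n ih => exact hu n ▸ hmaps ih
  have hanti : Antitone u := antitone_nat_of_succ_le fun n => hu n ▸ hle _ (hmem n)
  have hbdd : BddBelow (range u) := hS.mono (range_subset_iff.mpr hmem)
  exact ⟨_, tendsto_atTop_ciInf hanti hbdd⟩

namespace VariableUncertainty

noncomputable def step (a b s x : ℝ) : ℝ :=
  ((x - a) * x * (1 - s) + (b - x) * x * (1 + s)) / (b - a)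

variable {a b s x : ℝ}

theorem step_sub_self (hab : a < b) :
    step a b s x - x = -(s * x * (2 * x - (a + b)) / (b - a)) := by
  have : b - a ≠ 0 := (sub_pos.mpr hab).ne'
  unfold step
  field_simp
  ring

theorem step_sub_midpoint (hab : a < b) :
    step a b s x - (a + b) / 2 = (x - (a + b) / 2) * (b - a - 2 * s * x) / (b - a) := by
  have : b - a ≠ 0 := (sub_pos.mpr hab).ne'
  unfold step
  field_simp
  ring

theorem step_le_self (hab : a < b) (hs : 0 ≤ s) (hx : 0 ≤ x) (hmx : (a + b) / 2 ≤ x) :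
    step a b s x ≤ x := by
  have : 0 ≤ s * x * (2 * x - (a + b)) / (b - a) :=
    div_nonneg (mul_nonneg (mul_nonneg hs hx) (by linarith)) (sub_pos.mpr hab).le
  linarith [step_sub_self (s := s) (x := x) hab]

theorem midpoint_le_step (hab : a < b) (hs : 0 ≤ s) (hsb : 2 * s * b ≤ b - a)
    (hmx : (a + b) / 2 ≤ x) (hxb : x ≤ b) : (a + b) / 2 ≤ step a b s x := by
  have hsx : 2 * s * x ≤ 2 * s * b := by gcongr
  have : 0 ≤ (x - (a + b) / 2) * (b - a - 2 * s * x) / (b - a) :=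
    div_nonneg (mul_nonneg (by linarith) (by linarith)) (sub_pos.mpr hab).le
  linarith [step_sub_midpoint (s := s) (x := x) hab]

theorem mapsTo_step (ha : 0 ≤ a) (hab : a < b) (hs : 0 ≤ s) (hsb : 2 * s * b ≤ b - a) :
    MapsTo (step a b s) (Icc ((a + b) / 2) b) (Icc ((a + b) / 2) b) := fun _ ⟨hmx, hxb⟩ =>
  ⟨midpoint_le_step hab hs hsb hmx hxb,
    (step_le_self hab hs (by linarith) hmx).trans hxb⟩

end VariableUncertainty

theorem vu_threshold_converges
    (a b s : ℝ) (ha : 0 ≤ a) (hab : a < b) (hs : 0 < s)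
    (hsb : 2 * s * b ≤ b - a) (θ : ℕ → ℝ) (hθ1 : θ 1 = b)
    (hrec : ∀ k, 1 ≤ k → θ (k + 1) =
      ((θ k - a) * θ k * (1 - s) + (b - θ k) * θ k * (1 + s)) / (b - a)) :
    ∃ l : ℝ, Tendsto θ atTop (𝓝 l) := by
  obtain ⟨l, hl⟩ := exists_tendsto_of_antitone_orbit (u := fun n => θ (n + 1)) bddBelow_Icc
    (VariableUncertainty.mapsTo_step ha hab hs.le hsb)
    (fun x hx => VariableUncertainty.step_le_self hab hs.le (by linarith [hx.1]) hx.1)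
    (by simp only [zero_add, hθ1]; exact ⟨by linarith, le_rfl⟩)
    (fun n => hrec (n + 1) (Nat.le_add_left 1 n))
  exact ⟨l, (tendsto_add_atTop_iff_nat 1).mp hl⟩
end
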